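/- A swap of b_{k-1} and b_k in the LLL algorithm, performed when the Lovász condition fails (i.e. when (b_k^* + μ_{k,k-1} b_{k-1}^*, b_k^* + μ_{k,k-1} b_{k-1}^*) < (3/4)(b_{k-1}^*, b_{k-1}^*)), strictly decreases d_{k-1} = ∏_{j≤k-1}(b_j^*,b_j^*) by a factor less than 3/4, and leaves d_i unchanged for i ≠ k-1. -/

import Mathlib

/-!
Write `V` for the span of `b 0, …, b (K - 1)`, `x = b*_K` and `y` for the component of `b (K + 1)`
orthogonal to `V`. After the swap, `y` is the new Gram–Schmidt vector at `K`, and the Gram–Schmidt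
vectors at `K + 1` before and after the swap are `y - proj_x y` and `x - proj_y x`; all other ones
are unchanged, since they only depend on `b s` and the span of the earlier vectors. As
`y = b*_{K+1} + μ b*_K`, the failed Lovász condition says `‖y‖² < (3/4) ‖x‖²`. The product
`‖x‖² ‖y - proj_x y‖²` of the two factors that change is the 2 × 2 Gram determinant
`‖x‖² ‖y‖² - ⟪x, y⟫²`, which is symmetric in `x` and `y`.
-/

open Submodule InnerProductSpace Finset

section GramSchmidt

variable {𝕜 E ι : Type*} [RCLike 𝕜] [NormedAddCommGroup E] [InnerProductSpace 𝕜 E]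
  [LinearOrder ι] [LocallyFiniteOrderBot ι] [WellFoundedLT ι]

theorem sub_gramSchmidt_mem_span (f : ι → E) (n : ι) :
    f n - gramSchmidt 𝕜 f n ∈ span 𝕜 (f '' Set.Iio n) := by
  rw [gramSchmidt_def, sub_sub_cancel, ← span_gramSchmidt_Iio 𝕜 f n]
  refine sum_mem fun i hi => span_mono ?_ (starProjection_apply_mem _ _)
  exact Set.singleton_subset_iff.mpr (Set.mem_image_of_mem _ (Finset.mem_Iio.mp hi))

theorem gramSchmidt_mem_orthogonal_span (f : ι → E) (n : ι) :
    gramSchmidt 𝕜 f n ∈ (span 𝕜 (f '' Set.Iio n))ᗮ := by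
  rw [← span_gramSchmidt_Iio 𝕜 f n]
  refine (isOrtho_span.mpr ?_).le (mem_span_singleton_self _)
  rintro _ rfl _ ⟨i, hi, rfl⟩
  exact gramSchmidt_orthogonal 𝕜 f (ne_of_gt hi)

theorem gramSchmidt_eq_of_sub_mem_of_mem_orthogonal {f : ι → E} {n : ι} {v : E}
    (hsub : f n - v ∈ span 𝕜 (f '' Set.Iio n)) (horth : v ∈ (span 𝕜 (f '' Set.Iio n))ᗮ) :
    gramSchmidt 𝕜 f n = v := by
  refine sub_eq_zero.mp (disjoint_def.mp (span 𝕜 (f '' Set.Iio n)).orthogonal_disjoint _ ?_ ?_)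
  · simpa using sub_mem hsub (sub_gramSchmidt_mem_span f n)
  · exact sub_mem (gramSchmidt_mem_orthogonal_span f n) horth

theorem gramSchmidt_congr {f g : ι → E} {n : ι} (hfg : f n = g n)
    (hspan : span 𝕜 (f '' Set.Iio n) = span 𝕜 (g '' Set.Iio n)) :
    gramSchmidt 𝕜 f n = gramSchmidt 𝕜 g n :=
  gramSchmidt_eq_of_sub_mem_of_mem_orthogonal (hfg ▸ hspan ▸ sub_gramSchmidt_mem_span g n)
    (hspan ▸ gramSchmidt_mem_orthogonal_span g n)

end GramSchmidt

section GramSchmidtNat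

variable {𝕜 E : Type*} [RCLike 𝕜] [NormedAddCommGroup E] [InnerProductSpace 𝕜 E]

theorem span_image_Iio_succ (f : ℕ → E) (n : ℕ) :
    span 𝕜 (f '' Set.Iio (n + 1)) = span 𝕜 (f '' Set.Iio n) ⊔ 𝕜 ∙ gramSchmidt 𝕜 f n := by
  have hIio : Set.Iio (n + 1) = insert n (Set.Iio n) := Order.Iio_succ_eq_insert n
  rw [← span_gramSchmidt_Iio 𝕜 f, ← span_gramSchmidt_Iio 𝕜 f, hIio, Set.image_insert_eq,
    span_insert, sup_comm]

theorem gramSchmidt_succ_eq {f : ℕ → E} {n : ℕ} {y : E}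
    (hsub : f (n + 1) - y ∈ span 𝕜 (f '' Set.Iio n)) (horth : y ∈ (span 𝕜 (f '' Set.Iio n))ᗮ) :
    gramSchmidt 𝕜 f (n + 1) = y - (𝕜 ∙ gramSchmidt 𝕜 f n).starProjection y := by
  refine gramSchmidt_eq_of_sub_mem_of_mem_orthogonal ?_ ?_
  · rw [sub_sub_eq_add_sub, add_sub_right_comm, span_image_Iio_succ]
    exact add_mem (mem_sup_left hsub) (mem_sup_right (starProjection_apply_mem _ _))
  · rw [span_image_Iio_succ, ← inf_orthogonal]
    refine ⟨sub_mem horth ?_, sub_starProjection_mem_orthogonal y⟩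
    exact span_le.mpr (Set.singleton_subset_iff.mpr (gramSchmidt_mem_orthogonal_span f n))
      (starProjection_apply_mem _ _)

end GramSchmidtNat

theorem sq_norm_mul_sq_norm_sub_starProjection_singleton {F : Type*} [NormedAddCommGroup F]
    [InnerProductSpace ℝ F] (x y : F) :
    ‖x‖ ^ 2 * ‖y - (ℝ ∙ x).starProjection y‖ ^ 2 = ‖x‖ ^ 2 * ‖y‖ ^ 2 - inner ℝ x y ^ 2 := by
  rcases eq_or_ne x 0 with rfl | hx
  · simp
  have hx2 : ‖x‖ ^ 2 ≠ 0 := by positivity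
  rw [starProjection_singleton, norm_sub_sq_real, norm_smul, inner_smul_right, real_inner_comm]
  simp only [RCLike.ofReal_real_eq_id, id_eq, Real.norm_eq_abs, mul_pow, sq_abs]
  field_simp
  ring

theorem prod_range_eq_of_eq_off_pair {M : Type*} [CommMonoid M] {f g : ℕ → M} {k : ℕ}
    (hfg : ∀ s, s ≠ k → s ≠ k + 1 → f s = g s) (hpair : f k * f (k + 1) = g k * g (k + 1))
    {t : ℕ} (ht : t ≠ k + 1) : ∏ s ∈ range t, f s = ∏ s ∈ range t, g s := by
  have hlow : ∀ t ≤ k, ∏ s ∈ range t, f s = ∏ s ∈ range t, g s := fun t ht =>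
    prod_congr rfl fun s hs => hfg s (by grind) (by grind)
  rcases le_or_gt t k with htk | htk
  · exact hlow t htk
  induction t, (show k + 2 ≤ t by omega) using Nat.le_induction with
  | base => simp only [prod_range_succ, hlow k le_rfl, mul_assoc, hpair]
  | succ t hkt ih => rw [prod_range_succ, prod_range_succ, ih (by omega) (by omega),
      hfg t (by omega) (by omega)]

theorem Equiv.swap_image_Iio {k s : ℕ} (hs : s ≠ k + 1) :
    Equiv.swap k (k + 1) '' Set.Iio s = Set.Iio s := by
  ext y
  rw [Equiv.image_eq_preimage_symm, Equiv.symm_swap, Set.mem_preimage, Equiv.swap_apply_def]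
  split_ifs <;> simp only [Set.mem_Iio] <;> omega

section Swap

variable {𝕜 E : Type*} [RCLike 𝕜] [NormedAddCommGroup E] [InnerProductSpace 𝕜 E]
  (b : ℕ → E) (k : ℕ)

theorem gramSchmidt_comp_swap_of_ne {s : ℕ} (h₁ : s ≠ k) (h₂ : s ≠ k + 1) :
    gramSchmidt 𝕜 (b ∘ Equiv.swap k (k + 1)) s = gramSchmidt 𝕜 b s :=
  gramSchmidt_congr (by rw [Function.comp_apply, Equiv.swap_apply_of_ne_of_ne h₁ h₂])
    (by rw [Set.image_comp, Equiv.swap_image_Iio h₂])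

theorem span_image_comp_swap_Iio :
    span 𝕜 ((b ∘ Equiv.swap k (k + 1)) '' Set.Iio k) = span 𝕜 (b '' Set.Iio k) := by
  rw [Set.image_comp, Equiv.swap_image_Iio (by omega)]

theorem sub_gramSchmidt_comp_swap_mem_span :
    b (k + 1) - gramSchmidt 𝕜 (b ∘ Equiv.swap k (k + 1)) k ∈ span 𝕜 (b '' Set.Iio k) := by
  have h := sub_gramSchmidt_mem_span (𝕜 := 𝕜) (b ∘ Equiv.swap k (k + 1)) k
  rwa [span_image_comp_swap_Iio, Function.comp_apply, Equiv.swap_apply_left] at h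

theorem gramSchmidt_comp_swap_mem_orthogonal_span :
    gramSchmidt 𝕜 (b ∘ Equiv.swap k (k + 1)) k ∈ (span 𝕜 (b '' Set.Iio k))ᗮ :=
  span_image_comp_swap_Iio (𝕜 := 𝕜) b k ▸ gramSchmidt_mem_orthogonal_span _ k

theorem gramSchmidt_succ_eq_sub_starProjection_comp_swap :
    gramSchmidt 𝕜 b (k + 1) = gramSchmidt 𝕜 (b ∘ Equiv.swap k (k + 1)) k -
      (𝕜 ∙ gramSchmidt 𝕜 b k).starProjection (gramSchmidt 𝕜 (b ∘ Equiv.swap k (k + 1)) k) :=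
  gramSchmidt_succ_eq (sub_gramSchmidt_comp_swap_mem_span b k)
    (gramSchmidt_comp_swap_mem_orthogonal_span b k)

theorem gramSchmidt_comp_swap_succ :
    gramSchmidt 𝕜 (b ∘ Equiv.swap k (k + 1)) (k + 1) = gramSchmidt 𝕜 b k -
      (𝕜 ∙ gramSchmidt 𝕜 (b ∘ Equiv.swap k (k + 1)) k).starProjection (gramSchmidt 𝕜 b k) := by
  refine gramSchmidt_succ_eq ?_ ?_ <;> rw [span_image_comp_swap_Iio]
  · simpa using sub_gramSchmidt_mem_span b k
  · exact gramSchmidt_mem_orthogonal_span b k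

theorem gramSchmidt_comp_swap_self :
    gramSchmidt 𝕜 (b ∘ Equiv.swap k (k + 1)) k = gramSchmidt 𝕜 b (k + 1) +
      (inner 𝕜 (gramSchmidt 𝕜 b k) (b (k + 1)) / ((‖gramSchmidt 𝕜 b k‖ ^ 2 : ℝ) : 𝕜)) •
        gramSchmidt 𝕜 b k := by
  have hinner : inner 𝕜 (gramSchmidt 𝕜 b k) (gramSchmidt 𝕜 (b ∘ Equiv.swap k (k + 1)) k) =
      inner 𝕜 (gramSchmidt 𝕜 b k) (b (k + 1)) := by
    rw [eq_comm, ← sub_eq_zero, ← inner_sub_right]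
    exact inner_left_of_mem_orthogonal (sub_gramSchmidt_comp_swap_mem_span b k)
      (gramSchmidt_mem_orthogonal_span b k)
  rw [gramSchmidt_succ_eq_sub_starProjection_comp_swap, starProjection_singleton, hinner,
    sub_add_cancel]

end Swap

theorem sq_norm_gramSchmidt_comp_swap_mul {E : Type*} [NormedAddCommGroup E]
    [InnerProductSpace ℝ E] (b : ℕ → E) (k : ℕ) :
    ‖gramSchmidt ℝ (b ∘ Equiv.swap k (k + 1)) k‖ ^ 2 *
        ‖gramSchmidt ℝ (b ∘ Equiv.swap k (k + 1)) (k + 1)‖ ^ 2 =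
      ‖gramSchmidt ℝ b k‖ ^ 2 * ‖gramSchmidt ℝ b (k + 1)‖ ^ 2 := by
  rw [gramSchmidt_comp_swap_succ, gramSchmidt_succ_eq_sub_starProjection_comp_swap,
    sq_norm_mul_sq_norm_sub_starProjection_singleton,
    sq_norm_mul_sq_norm_sub_starProjection_singleton, real_inner_comm]
  ring

theorem prod_range_sq_norm_gramSchmidt_pos {E : Type*} [NormedAddCommGroup E]
    [InnerProductSpace ℝ E] {m t : ℕ} {b : ℕ → E}
    (hb : LinearIndependent ℝ (fun i : Fin m => b i)) (ht : t ≤ m) :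
    0 < ∏ s ∈ range t, ‖gramSchmidt ℝ b s‖ ^ 2 := by
  refine prod_pos fun s hs => pow_pos (norm_pos_iff.mpr (gramSchmidt_ne_zero_coe s ?_)) 2
  have hsm : s < m := (mem_range.mp hs).trans_le ht
  exact hb.comp (fun i : Set.Iic s => (⟨i, lt_of_le_of_lt i.2 hsm⟩ : Fin m))
    fun i j hij => Subtype.ext (congrArg Fin.val hij)

theorem stmt_15 {E : Type*} [NormedAddCommGroup E] [InnerProductSpace ℝ E]
    (nvec K : ℕ) (b : ℕ → E)
    (hli : LinearIndependent ℝ (fun i : Fin nvec => b i)) (hK : K + 1 < nvec)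
    (μ : ℝ)
    (hμ : μ = (inner ℝ (b (K + 1)) (InnerProductSpace.gramSchmidt ℝ b K) : ℝ) /
      (inner ℝ (InnerProductSpace.gramSchmidt ℝ b K) (InnerProductSpace.gramSchmidt ℝ b K) : ℝ))
    (hlovaszfail : ‖InnerProductSpace.gramSchmidt ℝ b (K + 1) + μ • InnerProductSpace.gramSchmidt ℝ b K‖ ^ 2 <
      (3 / 4) * ‖InnerProductSpace.gramSchmidt ℝ b K‖ ^ 2)
    (b' : ℕ → E) (hb' : b' = b ∘ Equiv.swap K (K + 1))
    (d d' : ℕ → ℝ)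
    (hd : ∀ t, d t = ∏ s ∈ Finset.range t,
      (inner ℝ (InnerProductSpace.gramSchmidt ℝ b s) (InnerProductSpace.gramSchmidt ℝ b s) : ℝ))
    (hd' : ∀ t, d' t = ∏ s ∈ Finset.range t,
      (inner ℝ (InnerProductSpace.gramSchmidt ℝ b' s) (InnerProductSpace.gramSchmidt ℝ b' s) : ℝ)) :
    d' (K + 1) < (3 / 4) * d (K + 1) ∧ ∀ t, t ≠ K + 1 → d' t = d t := by
  subst hb'
  simp only [real_inner_self_eq_norm_sq] at hd hd' hμ
  have hrest : ∀ t, t ≠ K + 1 → d' t = d t := fun t ht => by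
    rw [hd, hd']
    exact prod_range_eq_of_eq_off_pair
      (fun s h₁ h₂ => by rw [gramSchmidt_comp_swap_of_ne b K h₁ h₂])
      (sq_norm_gramSchmidt_comp_swap_mul b K) ht
  have hdK : 0 < d K := hd K ▸ prod_range_sq_norm_gramSchmidt_pos hli (by omega)
  refine ⟨?_, hrest⟩
  rw [hd' (K + 1), prod_range_succ, ← hd' K, hrest K (by omega), hd (K + 1), prod_range_succ,
    ← hd K, mul_left_comm, gramSchmidt_comp_swap_self, real_inner_comm (b (K + 1)),
    RCLike.ofReal_real_eq_id, id_eq, ← hμ]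
  exact mul_lt_mul_of_pos_left hlovaszfail hdK
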